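/- Suppose in addition that ∫ ψ†(x) dP(x) + ∫ φ†(y) dQ(y) ≤ Corr(P, Q) + ε for some ε ≥ 0. Then the inverse generative property for the single-discriminator method holds: W₂²((∇φ†)_*Q, P) ≤ ε / β†. -/

import Mathlib

open MeasureTheory ENNReal
open scoped RealInnerProductSpace

/-- Squared Wasserstein-2 distance: infimum over couplings of `∫ ‖x - y‖² / 2`. -/
noncomputable def W2sq {E : Type*} [NormedAddCommGroup E] [MeasurableSpace E]
    (μ ν : Measure E) : ℝ≥0∞ :=
  ⨅ (π : Measure (E × E)) (_ : IsProbabilityMeasure π)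
    (_ : π.map Prod.fst = μ) (_ : π.map Prod.snd = ν),
    ∫⁻ p, ENNReal.ofReal (‖p.1 - p.2‖ ^ 2 / 2) ∂π

/-!
Couple `(∇φ†)_*Q` with `P = (∇φ*)_*Q` through `Q` itself, via `y ↦ (∇φ†(y), ∇φ*(y))`.
Since `∇ψ†(∇φ†(y)) = y`, strong convexity of `ψ†` sharpens Fenchel–Young to
`β†/2 ‖∇φ†(y) - z‖² ≤ ψ†(z) + φ†(y) - ⟪y, z⟫` for every `z`. Taking `z = ∇φ*(y)` and integrating
against `Q`, the right-hand side becomes `∫ ψ† dP + ∫ φ† dQ - Corr(P, Q) ≤ ε`.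
-/

lemma ConvexOn.add_le_of_hasFDerivAt {E : Type*} [NormedAddCommGroup E] [NormedSpace ℝ E]
    {f : E → ℝ} {f' : E →L[ℝ] ℝ} {x : E} (hf : ConvexOn ℝ Set.univ f)
    (hx : HasFDerivAt f f' x) (y : E) : f x + f' (y - x) ≤ f y := by
  set L : ℝ →ᵃ[ℝ] E := AffineMap.lineMap x y
  have hline : ConvexOn ℝ Set.univ (f ∘ L) := by
    simpa using hf.comp_affineMap L
  have hderiv : HasDerivAt (f ∘ L) (f' (y - x)) 0 := by
    have hL : HasDerivAt L (y - x) 0 := AffineMap.hasDerivAt_lineMap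
    have hx0 : HasFDerivAt f f' (L 0) := by simpa [L] using hx
    exact hx0.comp_hasDerivAt 0 hL
  have := hline.le_slope_of_hasDerivAt (Set.mem_univ 0) (Set.mem_univ 1) one_pos hderiv
  simp only [slope_def_field, Function.comp_apply, L, AffineMap.lineMap_apply_one,
    AffineMap.lineMap_apply_zero, sub_zero, div_one] at this
  linarith

section InnerProductSpace

variable {E : Type*} [NormedAddCommGroup E] [InnerProductSpace ℝ E] [CompleteSpace E]

lemma StrongConvexOn.add_inner_add_sq_le_of_hasGradientAt {ψ : E → ℝ} {β : ℝ} {g x : E}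
    (hψ : StrongConvexOn Set.univ β ψ) (hg : HasGradientAt ψ g x) (y : E) :
    ψ x + ⟪g, y - x⟫ + β / 2 * ‖y - x‖ ^ 2 ≤ ψ y := by
  have hk := (strongConvexOn_iff_convex.mp hψ).add_le_of_hasFDerivAt
    (hg.hasFDerivAt.sub ((hasStrictFDerivAt_norm_sq x).hasFDerivAt.const_mul (β / 2))) y
  simp only [sub_apply, smul_apply, InnerProductSpace.toDual_apply_apply,
    innerSL_apply_apply, smul_eq_mul, nsmul_eq_mul, inner_sub_right,
    real_inner_self_eq_norm_sq] at hk
  rw [norm_sub_sq_real, real_inner_comm x y, inner_sub_right]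
  push_cast at hk
  linarith

lemma StrongConvexOn.sq_norm_sub_le_fenchelYoung_gap {ψ φ : E → ℝ} {β : ℝ} {x y : E}
    (hψ : StrongConvexOn Set.univ β ψ) (hg : HasGradientAt ψ y x)
    (hconj : φ y = ⟪x, y⟫ - ψ x) (z : E) :
    β / 2 * ‖x - z‖ ^ 2 ≤ ψ z + φ y - ⟪y, z⟫ := by
  have := hψ.add_inner_add_sq_le_of_hasGradientAt hg z
  rw [norm_sub_rev, inner_sub_right, real_inner_comm x] at this
  linarith

theorem measurable_gradient [MeasurableSpace E] [BorelSpace E] (f : E → ℝ) :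
    Measurable (gradient f) :=
  (InnerProductSpace.toDual ℝ E).symm.continuous.measurable.comp (measurable_fderiv ℝ f)

end InnerProductSpace

section Coupling

variable {α E : Type*} [MeasurableSpace α] [NormedAddCommGroup E] [MeasurableSpace E]
  (μ : Measure α) [IsProbabilityMeasure μ] {T S : α → E}

lemma W2sq_map_le_lintegral (hT : Measurable T) (hS : Measurable S) :
    W2sq (μ.map T) (μ.map S) ≤ ∫⁻ a, ENNReal.ofReal (‖T a - S a‖ ^ 2 / 2) ∂μ := by
  have hTS : Measurable fun a => (T a, S a) := hT.prodMk hS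
  have : IsProbabilityMeasure (μ.map fun a => (T a, S a)) :=
    Measure.isProbabilityMeasure_map hTS.aemeasurable
  refine iInf₂_le_of_le (μ.map fun a => (T a, S a)) this <| iInf₂_le_of_le ?_ ?_ ?_
  · rw [Measure.map_map measurable_fst hTS]; rfl
  · rw [Measure.map_map measurable_snd hTS]; rfl
  · exact lintegral_map_le _ _

lemma W2sq_map_le_integral_of_le (hT : Measurable T) (hS : Measurable S) {g : α → ℝ}
    (hg : Integrable g μ) (hle : ∀ a, ‖T a - S a‖ ^ 2 / 2 ≤ g a) :
    W2sq (μ.map T) (μ.map S) ≤ ENNReal.ofReal (∫ a, g a ∂μ) := by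
  have hg_nonneg : 0 ≤ᵐ[μ] g := ae_of_all _ fun a => le_trans (by positivity) (hle a)
  calc W2sq (μ.map T) (μ.map S) ≤ ∫⁻ a, ENNReal.ofReal (‖T a - S a‖ ^ 2 / 2) ∂μ :=
        W2sq_map_le_lintegral μ hT hS
    _ ≤ ∫⁻ a, ENNReal.ofReal (g a) ∂μ := lintegral_mono fun a => ENNReal.ofReal_le_ofReal (hle a)
    _ = ENNReal.ofReal (∫ a, g a ∂μ) := (ofReal_integral_eq_lintegral_ofReal hg hg_nonneg).symm

end Coupling

theorem single_discriminator_inverse_generative_general {D : ℕ}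
    (P Q : Measure (EuclideanSpace ℝ (Fin D)))
    [IsProbabilityMeasure Q]
    -- Brenier potentials
    (φs : EuclideanSpace ℝ (Fin D) → ℝ)
    (hQP : Q.map (gradient φs) = P)
    -- discriminator and its conjugate
    (ψd : EuclideanSpace ℝ (Fin D) → ℝ) (hψd : Differentiable ℝ ψd)
    (βd : ℝ) (hβd : 0 < βd)
    (hstrong : ConvexOn ℝ Set.univ (fun x => ψd x - βd / 2 * ‖x‖ ^ 2))
    (φd : EuclideanSpace ℝ (Fin D) → ℝ)
    (hconj : ∀ y, φd y = ⟪gradient φd y, y⟫ - ψd (gradient φd y))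
    (hdinv : ∀ y, gradient ψd (gradient φd y) = y)
    -- integrability of all the integrals involved
    (hI1 : Integrable ψd P)
    (hI2 : Integrable φd Q)
    (hI3 : Integrable (fun y => ⟪y, gradient φs y⟫) Q)
    (ε : ℝ)
    (hclose : (∫ x, ψd x ∂P) + (∫ y, φd y ∂Q) ≤ (∫ y, ⟪y, gradient φs y⟫ ∂Q) + ε) :
    W2sq (Q.map (gradient φd)) P ≤ ENNReal.ofReal (ε / βd) := by
  set T := gradient φd
  set S := gradient φs
  have hS : Measurable S := measurable_gradient φs
  set gap : EuclideanSpace ℝ (Fin D) → ℝ := fun y => ψd (S y) + φd y - ⟪y, S y⟫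
  have hpointwise (y) : ‖T y - S y‖ ^ 2 / 2 ≤ gap y / βd := by
    have hgrad : HasGradientAt ψd y (T y) := by
      simpa only [hdinv y] using (hψd (T y)).hasGradientAt
    have := (strongConvexOn_iff_convex.mpr hstrong).sq_norm_sub_le_fenchelYoung_gap
      hgrad (hconj y) (S y)
    rw [le_div_iff₀ hβd]
    linarith
  have hψdS : Integrable (fun y => ψd (S y)) Q := (hQP ▸ hI1).comp_measurable hS
  have hsum : Integrable (fun y => ψd (S y) + φd y) Q := hψdS.add hI2
  have hgap_integral : ∫ y, gap y ∂Q ≤ ε := by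
    have hψdS_integral : ∫ y, ψd (S y) ∂Q = ∫ x, ψd x ∂P := by
      rw [← hQP, integral_map hS.aemeasurable hψd.continuous.aestronglyMeasurable]
    rw [integral_sub hsum hI3, integral_add hψdS hI2]
    linarith
  calc W2sq (Q.map T) P = W2sq (Q.map T) (Q.map S) := by rw [hQP]
    _ ≤ ENNReal.ofReal (∫ y, gap y / βd ∂Q) :=
        W2sq_map_le_integral_of_le Q (measurable_gradient φd) hS
          ((hsum.sub hI3).div_const βd) hpointwise
    _ ≤ ENNReal.ofReal (ε / βd) := by
        rw [integral_div]
        gcongr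

/-- Inverse generative property of the single-discriminator method:
if `∫ ψ† dP + ∫ φ† dQ ≤ Corr(P,Q) + ε`, then `W₂²((∇φ†)_*Q, P) ≤ ε/β†`. -/
theorem single_discriminator_inverse_generative {D : ℕ}
    (P Q : Measure (EuclideanSpace ℝ (Fin D)))
    [IsProbabilityMeasure P] [IsProbabilityMeasure Q]
    (hP2 : Integrable (fun x => ‖x‖ ^ 2) P)
    (hQ2 : Integrable (fun y => ‖y‖ ^ 2) Q)
    -- Brenier potentials
    (ψs φs : EuclideanSpace ℝ (Fin D) → ℝ)
    (hψs : Differentiable ℝ ψs) (hψsc : ConvexOn ℝ Set.univ ψs)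
    (hφs : Differentiable ℝ φs) (hφsc : ConvexOn ℝ Set.univ φs)
    (hinv : ∀ y, gradient ψs (gradient φs y) = y)
    (hQP : Q.map (gradient φs) = P)
    (hPQ : P.map (gradient ψs) = Q)
    -- discriminator and its conjugate
    (ψd : EuclideanSpace ℝ (Fin D) → ℝ) (hψd : Differentiable ℝ ψd)
    (βd : ℝ) (hβd : 0 < βd)
    (hstrong : ConvexOn ℝ Set.univ (fun x => ψd x - βd / 2 * ‖x‖ ^ 2))
    (φd : EuclideanSpace ℝ (Fin D) → ℝ) (hφd : Differentiable ℝ φd)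
    (hφdc : ConvexOn ℝ Set.univ φd)
    (hconj : ∀ y, φd y = ⟪gradient φd y, y⟫ - ψd (gradient φd y))
    (hdinv : ∀ y, gradient ψd (gradient φd y) = y)
    -- integrability of all the integrals involved
    (hI1 : Integrable ψd P)
    (hI2 : Integrable φd Q)
    (hI3 : Integrable (fun y => ⟪y, gradient φs y⟫) Q)
    (ε : ℝ) (hε : 0 ≤ ε)
    (hclose : (∫ x, ψd x ∂P) + (∫ y, φd y ∂Q) ≤ (∫ y, ⟪y, gradient φs y⟫ ∂Q) + ε) :
    W2sq (Q.map (gradient φd)) P ≤ ENNReal.ofReal (ε / βd) :=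
  single_discriminator_inverse_generative_general P Q φs hQP ψd hψd βd hβd hstrong φd hconj hdinv
    hI1 hI2 hI3 ε hclose
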